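/- arXiv:2511.23275 — 3 statements merged into one kernel-verified Lean document; each statement's English description precedes it below -/
import Mathlib

section
/- Let q and p be PMFs on a countable set 𝒳, both strictly positive on 𝒳, and let M be a matching set whose induced graph G is connected. If q(x)/q(x') = p(x)/p(x') for every x ∈ 𝒳 and every x' ∈ M(x), then q(x)·p(x*) = p(x)·q(x*) for every pair x, x* ∈ 𝒳, and consequently q = p. -/
/-!
Rearranged, `q x / q x' = p x / p x'` says that the ratio `q / p` takes the same value at the two
ends of every edge of `G`; by connectedness it is a constant `c`, so `q = c • p`, and comparing
total masses gives `c = 1`.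
-/

theorem Relation.ReflTransGen.apply_eq {α β : Type*} {r : α → α → Prop} {f : α → β}
    (hf : ∀ a b, r a b → f a = f b) {a b : α} (h : ReflTransGen r a b) : f a = f b := by
  induction h with
  | refl => rfl
  | tail _ hbc ih => exact ih.trans (hf _ _ hbc)

theorem eq_of_div_const_of_tsum_eq {α K : Type*} [DivisionSemiring K] [TopologicalSpace K]
    [IsTopologicalSemiring K] [T2Space K] {q p : α → K} (hp : ∀ x, p x ≠ 0)
    (hconst : ∀ x y, q x / p x = q y / p y) (hsum : ∑' x, q x = ∑' x, p x)
    (hsum_ne : ∑' x, p x ≠ 0) : q = p := by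
  funext x
  have hqp : ∀ y, q y = q x / p x * p y := fun y => by rw [hconst x y, div_mul_cancel₀ _ (hp y)]
  rw [tsum_congr hqp, tsum_mul_left] at hsum
  exact (div_eq_one_iff_eq (hp x)).1 ((mul_eq_right₀ hsum_ne).1 hsum)

theorem ratio_matching_implies_equal_general
    {𝒳 : Type*}
    (q p : 𝒳 → ℝ) (M : 𝒳 → Finset 𝒳)
    -- q and p are PMFs, strictly positive on 𝒳
    (hq_pos : ∀ x, 0 < q x) (hq_sum : ∑' x, q x = 1)
    (hp_pos : ∀ x, 0 < p x) (hp_sum : ∑' x, p x = 1)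
    -- the induced graph is connected
    (hconn : ∀ x y : 𝒳, Relation.ReflTransGen (fun a b => b ∈ M a ∨ a ∈ M b) x y)
    -- the local ratios match along the matching set
    (hratio : ∀ x, ∀ x' ∈ M x, q x / q x' = p x / p x') :
    (∀ x xstar : 𝒳, q x * p xstar = p x * q xstar) ∧ q = p := by
  have hedge : ∀ a b, b ∈ M a → q a / p a = q b / p b := fun a b hab =>
    (div_eq_div_iff_div_eq_div' (hq_pos b).ne' (hp_pos a).ne').1 (hratio a b hab)
  have hconst : ∀ x y, q x / p x = q y / p y := fun x y =>
    (hconn x y).apply_eq fun a b hab => hab.elim (hedge a b) fun hba => (hedge b a hba).symm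
  refine ⟨fun x y => ?_, eq_of_div_const_of_tsum_eq (fun x => (hp_pos x).ne') hconst
    (hq_sum.trans hp_sum.symm) (hp_sum ▸ one_ne_zero)⟩
  rw [mul_comm (p x)]
  exact (div_eq_div_iff (hp_pos x).ne' (hp_pos y).ne').1 (hconst x y)

/-- If two strictly positive PMFs `q` and `p` on a countable set have equal
local ratios `q(x)/q(x') = p(x)/p(x')` along a matching set `M` whose induced graph is
connected, then `q(x)·p(x*) = p(x)·q(x*)` for every pair of points, and consequently `q = p`. -/
theorem ratio_matching_implies_equal
    {𝒳 : Type*} [Countable 𝒳]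
    (q p : 𝒳 → ℝ) (M : 𝒳 → Finset 𝒳) (m : ℕ)
    -- q and p are PMFs, strictly positive on 𝒳
    (hq_pos : ∀ x, 0 < q x) (hq_sum : ∑' x, q x = 1)
    (hp_pos : ∀ x, 0 < p x) (hp_sum : ∑' x, p x = 1)
    -- M is a matching set with |M(x)| = m < ∞ for every x
    (hM_card : ∀ x, (M x).card = m)
    -- the induced graph is connected
    (hconn : ∀ x y : 𝒳, Relation.ReflTransGen (fun a b => b ∈ M a ∨ a ∈ M b) x y)
    -- the local ratios match along the matching set
    (hratio : ∀ x, ∀ x' ∈ M x, q x / q x' = p x / p x') :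
    (∀ x xstar : 𝒳, q x * p xstar = p x * q xstar) ∧ q = p :=
  ratio_matching_implies_equal_general q p M hq_pos hq_sum hp_pos hp_sum hconn hratio
end

section
/- Suppose p_θ is an exponential family model, i.e. p_θ(x) = exp(η(θ)ᵀT(x) + B(x) − log Z(θ)). Then the LRM loss estimator satisfies L̂_n(θ) = η(θ)ᵀ Λ_n η(θ) − 2 η(θ)ᵀ ν_n + C, where C depends on the data and on q̂ but not on θ, Λ_n := (1/n) Σ_{i=1}^n (1/|M(x_i)|) Σ_{x'∈M(x_i)} (T(x')−T(x_i))(T(x')−T(x_i))ᵀ ∈ ℝ^{p×p}, and ν_n := (1/n) Σ_{i=1}^n (1/|M(x_i)|) Σ_{x'∈M(x_i)} (T(x')−T(x_i)) (log(q̂(x')/q̂(x_i)) − (B(x')−B(x_i))) ∈ ℝ^p. -/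
/-!
Every quantity in the statement is an average, over the sample and over each matching set,
of a function of the pair `(x_i, x')`, and this average is linear in that function.
For an exponential family the normalisation cancels in a likelihood ratio, so
`log (p_θ(x') / p_θ(x)) = η(θ) ⬝ᵥ d + β` with `d = T(x') - T(x)` and `β = B(x') - B(x)`.
Expanding the square, the summand of `L̂_n` is `(η ⬝ᵥ d)² - 2 (η ⬝ᵥ d)(ℓ - β)` plus a term
free of `θ`, where `ℓ` is the log ratio of `q̂`; averaging the first two terms gives
`η ⬝ᵥ Λ_n η` and `2 η ⬝ᵥ ν_n`.
-/

open Matrix Finset Real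

section MatchingAvg

variable {𝒳 E F : Type*} [AddCommGroup E] [Module ℝ E] [AddCommGroup F] [Module ℝ F] {n : ℕ}

noncomputable def matchingAvg (M : 𝒳 → Finset 𝒳) (xs : Fin n → 𝒳) :
    (𝒳 → 𝒳 → E) →ₗ[ℝ] E where
  toFun g := (1 / (n : ℝ)) • ∑ i, (1 / ((M (xs i)).card : ℝ)) • ∑ x' ∈ M (xs i), g (xs i) x'
  map_add' g h := by simp only [Pi.add_apply, sum_add_distrib, smul_add]
  map_smul' c g := by
    simp only [Pi.smul_apply, RingHom.id_apply, smul_sum]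
    simp only [smul_comm c]

theorem LinearMap.map_matchingAvg (f : E →ₗ[ℝ] F) (M : 𝒳 → Finset 𝒳) (xs : Fin n → 𝒳)
    (g : 𝒳 → 𝒳 → E) :
    f (matchingAvg M xs g) = matchingAvg M xs (fun a b => f (g a b)) := by
  simp only [matchingAvg, LinearMap.coe_mk, AddHom.coe_mk, map_smul, map_sum]

end MatchingAvg

theorem log_div_eq_of_exponential_family {𝒳 ι : Type*} [Fintype ι] (η : ι → ℝ)
    (T : 𝒳 → ι → ℝ) (B : 𝒳 → ℝ) (logZ : ℝ) (pθ : 𝒳 → ℝ)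
    (hpθ : ∀ x, pθ x = exp (η ⬝ᵥ T x + B x - logZ)) (a b : 𝒳) :
    log (pθ b / pθ a) = η ⬝ᵥ (T b - T a) + (B b - B a) := by
  rw [hpθ, hpθ, ← exp_sub, log_exp, dotProduct_sub]
  ring

theorem sq_sub_two_mul_eq_quadratic {ι : Type*} [Fintype ι] (η d : ι → ℝ) (β ℓ : ℝ) :
    (η ⬝ᵥ d + β) ^ 2 - 2 * (η ⬝ᵥ d + β) * ℓ
      = η ⬝ᵥ vecMulVec d d *ᵥ η - 2 * (η ⬝ᵥ (ℓ - β) • d) + (β ^ 2 - 2 * β * ℓ) := by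
  rw [vecMulVec_mulVec, op_smul_eq_smul, dotProduct_smul, dotProduct_smul, smul_eq_mul,
    smul_eq_mul, dotProduct_comm d η]
  ring

theorem lrm_loss_quadratic_exponential_family_general
    {𝒳 : Type*} {Θ : Type*} {p n : ℕ}
    -- matching set with |M(x)| = m < ∞
    (M : 𝒳 → Finset 𝒳)
    -- exponential family model
    (η : Θ → (Fin p → ℝ)) (T : 𝒳 → (Fin p → ℝ)) (B : 𝒳 → ℝ)
    (Z : Θ → ℝ)
    (pmodel : Θ → 𝒳 → ℝ)
    (hmodel : ∀ θ x, pmodel θ x = Real.exp (η θ ⬝ᵥ T x + B x - Real.log (Z θ)))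
    -- observations and a strictly positive PMF estimate
    (xs : Fin n → 𝒳) (qhat : 𝒳 → ℝ)
    -- the LRM loss estimator
    (Lhat : Θ → ℝ)
    (hLhat : ∀ θ, Lhat θ = (1 / (n : ℝ)) * ∑ i : Fin n, (1 / ((M (xs i)).card : ℝ)) *
        ∑ x' ∈ M (xs i), ((Real.log (pmodel θ x' / pmodel θ (xs i))) ^ 2
          - 2 * Real.log (pmodel θ x' / pmodel θ (xs i)) * Real.log (qhat x' / qhat (xs i))))
    -- the matrix Λ_n and the vector ν_n
    (Λ : Matrix (Fin p) (Fin p) ℝ)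
    (hΛ : Λ = Matrix.of fun j k => (1 / (n : ℝ)) * ∑ i : Fin n, (1 / ((M (xs i)).card : ℝ)) *
        ∑ x' ∈ M (xs i), (T x' j - T (xs i) j) * (T x' k - T (xs i) k))
    (ν : Fin p → ℝ)
    (hν : ν = fun j => (1 / (n : ℝ)) * ∑ i : Fin n, (1 / ((M (xs i)).card : ℝ)) *
        ∑ x' ∈ M (xs i), (T x' j - T (xs i) j) *
          (Real.log (qhat x' / qhat (xs i)) - (B x' - B (xs i)))) :
    ∃ C : ℝ, ∀ θ, Lhat θ = η θ ⬝ᵥ Λ.mulVec (η θ) - 2 * (η θ ⬝ᵥ ν) + C := by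
  set d : 𝒳 → 𝒳 → Fin p → ℝ := fun a b => T b - T a
  set β : 𝒳 → 𝒳 → ℝ := fun a b => B b - B a
  set ℓ : 𝒳 → 𝒳 → ℝ := fun a b => log (qhat b / qhat a)
  have hΛ_avg : Λ = matchingAvg M xs (fun a b => vecMulVec (d a b) (d a b)) := by
    ext j k
    simp [hΛ, matchingAvg, d, Matrix.sum_apply, vecMulVec_apply]
  have hν_avg : ν = matchingAvg M xs (fun a b => (ℓ a b - β a b) • d a b) := by
    ext j
    simp [hν, matchingAvg, d, ℓ, β, mul_comm]
  refine ⟨matchingAvg M xs (fun a b => β a b ^ 2 - 2 * β a b * ℓ a b), fun θ => ?_⟩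
  have hquad : η θ ⬝ᵥ Λ *ᵥ η θ
      = matchingAvg M xs (fun a b => η θ ⬝ᵥ vecMulVec (d a b) (d a b) *ᵥ η θ) := by
    rw [hΛ_avg]
    exact (dotProductBilin ℝ ℝ (η θ) ∘ₗ (mulVecBilin ℝ ℝ).flip (η θ)).map_matchingAvg M xs _
  have hlin : η θ ⬝ᵥ ν = matchingAvg M xs (fun a b => η θ ⬝ᵥ (ℓ a b - β a b) • d a b) := by
    rw [hν_avg]
    exact (dotProductBilin ℝ ℝ (η θ)).map_matchingAvg M xs _
  have hlog := log_div_eq_of_exponential_family (η θ) T B _ _ (hmodel θ)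
  calc Lhat θ = matchingAvg M xs (fun a b => log (pmodel θ b / pmodel θ a) ^ 2
        - 2 * log (pmodel θ b / pmodel θ a) * ℓ a b) := by
        simp [hLhat, matchingAvg, ℓ]
    _ = _ := by
        rw [hquad, hlin, ← smul_eq_mul (2 : ℝ), ← map_smul, ← map_sub, ← map_add]
        simp only [hlog, sq_sub_two_mul_eq_quadratic]
        rfl

/-- For an exponential family model
`p_θ(x) = exp(η(θ)ᵀ T(x) + B(x) − log Z(θ))`, the LRM loss estimator is quadratic in the
natural parameter: `L̂_n(θ) = η(θ)ᵀ Λ_n η(θ) − 2 η(θ)ᵀ ν_n + C` for a constant `C` that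
depends on the data and on `q̂` but not on `θ`. -/
theorem lrm_loss_quadratic_exponential_family
    {𝒳 : Type*} {Θ : Type*} {p n : ℕ} (hn : 0 < n)
    -- matching set with |M(x)| = m < ∞
    (M : 𝒳 → Finset 𝒳) (m : ℕ) (hm : 0 < m) (hM_card : ∀ x, (M x).card = m)
    -- exponential family model
    (η : Θ → (Fin p → ℝ)) (T : 𝒳 → (Fin p → ℝ)) (B : 𝒳 → ℝ)
    (Z : Θ → ℝ) (hZ : ∀ θ, 0 < Z θ)
    (pmodel : Θ → 𝒳 → ℝ)
    (hmodel : ∀ θ x, pmodel θ x = Real.exp (η θ ⬝ᵥ T x + B x - Real.log (Z θ)))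
    -- observations and a strictly positive PMF estimate
    (xs : Fin n → 𝒳) (qhat : 𝒳 → ℝ) (hqhat : ∀ x, 0 < qhat x)
    -- the LRM loss estimator
    (Lhat : Θ → ℝ)
    (hLhat : ∀ θ, Lhat θ = (1 / (n : ℝ)) * ∑ i : Fin n, (1 / ((M (xs i)).card : ℝ)) *
        ∑ x' ∈ M (xs i), ((Real.log (pmodel θ x' / pmodel θ (xs i))) ^ 2
          - 2 * Real.log (pmodel θ x' / pmodel θ (xs i)) * Real.log (qhat x' / qhat (xs i))))
    -- the matrix Λ_n and the vector ν_n
    (Λ : Matrix (Fin p) (Fin p) ℝ)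
    (hΛ : Λ = Matrix.of fun j k => (1 / (n : ℝ)) * ∑ i : Fin n, (1 / ((M (xs i)).card : ℝ)) *
        ∑ x' ∈ M (xs i), (T x' j - T (xs i) j) * (T x' k - T (xs i) k))
    (ν : Fin p → ℝ)
    (hν : ν = fun j => (1 / (n : ℝ)) * ∑ i : Fin n, (1 / ((M (xs i)).card : ℝ)) *
        ∑ x' ∈ M (xs i), (T x' j - T (xs i) j) *
          (Real.log (qhat x' / qhat (xs i)) - (B x' - B (xs i)))) :
    ∃ C : ℝ, ∀ θ, Lhat θ = η θ ⬝ᵥ Λ.mulVec (η θ) - 2 * (η θ ⬝ᵥ ν) + C :=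
  lrm_loss_quadratic_exponential_family_general M η T B Z pmodel hmodel xs qhat Lhat hLhat Λ hΛ ν hν
end

section
/- Let x_1, x_2, … be i.i.d. samples from a PMF q0 on a countable set 𝒳, let M be a matching set with M(x) ⊆ supp(q0) for all x, and let q̂_α be the Laplace-smoothed estimator with α > 0. Then for every ε > 0, sup_{x ∈ 𝒳 : q0(x) ≥ ε} max_{x' ∈ M(x)} | log(q̂_α(x')/q̂_α(x)) − log(q0(x')/q0(x)) | → 0 almost surely as n → ∞. -/
/-!
By the strong law of large numbers, `C_n(y) / n → q0(y)` almost surely for each `y`, and the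
smoothing terms only perturb numerator and denominator of `q̂_α(y)` by constants, so
`q̂_α(y) → q0(y)`; countably many `y` cost one null set. As `q0` is summable, `{x | ε ≤ q0 x}`
is finite, so the supremum runs over finitely many pairs `(x, x')`, and along each of them the
log-ratio converges by continuity of `log` at `q0(x') / q0(x) > 0`.
-/

open MeasureTheory Filter Topology ProbabilityTheory

theorem Summable.finite_setOf_le {ι : Type*} {f : ι → ℝ} (hf : Summable f) {ε : ℝ}
    (hε : 0 < ε) : {x | ε ≤ f x}.Finite := by
  have h := hf.tendsto_cofinite_zero.eventually (gt_mem_nhds hε)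
  rw [eventually_cofinite] at h
  exact h.subset fun x hx => not_lt.2 hx

theorem tendsto_add_div_add_of_tendsto_div {S : ℕ → ℝ} {L : ℝ} (a b : ℝ)
    (h : Tendsto (fun n => S n / n) atTop (𝓝 L)) :
    Tendsto (fun n => (S n + a) / (n + b)) atTop (𝓝 L) := by
  have hnum : Tendsto (fun n : ℕ => (S n + a) / n) atTop (𝓝 (L + 0)) := by
    simp_rw [add_div]
    exact h.add (tendsto_const_div_atTop_nhds_zero_nat a)
  have hden : Tendsto (fun n : ℕ => ((n : ℝ) + b) / n) atTop (𝓝 (1 + 0)) := by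
    refine (tendsto_const_nhds.add (tendsto_const_div_atTop_nhds_zero_nat b)).congr' ?_
    filter_upwards [eventually_ne_atTop 0] with n hn
    rw [add_div, div_self (Nat.cast_ne_zero.2 hn)]
  rw [add_zero] at hnum hden
  refine (div_one L ▸ hnum.div hden one_ne_zero).congr' ?_
  filter_upwards [eventually_ne_atTop 0] with n hn
  exact div_div_div_cancel_right₀ (Nat.cast_ne_zero.2 hn) _ _

namespace ProbabilityTheory

variable {Ω E : Type*} [MeasurableSpace Ω] [MeasurableSpace E] [MeasurableSingletonClass E]

theorem identDistrib_of_forall_measure_preimage_singleton [Countable E] {μ ν : Measure Ω}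
    {X Y : Ω → E} (hX : Measurable X) (hY : Measurable Y)
    (h : ∀ x, μ (X ⁻¹' {x}) = ν (Y ⁻¹' {x})) : IdentDistrib X Y μ ν where
  aemeasurable_fst := hX.aemeasurable
  aemeasurable_snd := hY.aemeasurable
  map_eq := Measure.ext_of_singleton fun x => by
    rw [Measure.map_apply hX (measurableSet_singleton x),
      Measure.map_apply hY (measurableSet_singleton x), h]

theorem ae_tendsto_empirical_frequency [DecidableEq E] {μ : Measure Ω} [IsFiniteMeasure μ]
    {X : ℕ → Ω → E} (hX : ∀ i, Measurable (X i))
    (hindep : Pairwise (Function.onFun (IndepFun · · μ) X))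
    (hident : ∀ i, IdentDistrib (X i) (X 0) μ μ) (y : E) :
    ∀ᵐ ω ∂μ, Tendsto (fun n : ℕ => (∑ i ∈ Finset.range n, if X i ω = y then (1 : ℝ) else 0) / n)
      atTop (𝓝 (μ.real (X 0 ⁻¹' {y}))) := by
  set g : E → ℝ := Set.indicator {y} 1
  have hg : Measurable g := measurable_one.indicator (measurableSet_singleton y)
  have hX0 : MeasurableSet (X 0 ⁻¹' {y}) := hX 0 (measurableSet_singleton y)
  have hg_X : ∀ i, g ∘ X i = (X i ⁻¹' {y}).indicator 1 := fun i => by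
    ext ω; exact (Set.indicator_comp_right (X i)).symm
  have hint : Integrable (g ∘ X 0) μ := by
    rw [hg_X]; exact (integrable_const 1).indicator hX0
  have hlaw := strong_law_ae_real (fun i => g ∘ X i) hint
    (fun i j hij => (hindep hij).comp hg hg) (fun i => (hident i).comp hg)
  rw [hg_X, integral_indicator_one hX0] at hlaw
  filter_upwards [hlaw] with ω hω
  convert hω using 4 with n i
  simp only [g, Function.comp_apply, Set.indicator_apply, Set.mem_singleton_iff,
    Pi.one_apply]

end ProbabilityTheory

theorem laplace_estimator_log_ratio_uniform_consistent_general
    {𝒳 : Type*} [Countable 𝒳] [DecidableEq 𝒳] [MeasurableSpace 𝒳] [MeasurableSingletonClass 𝒳]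
    {Ω : Type*} [MeasurableSpace Ω] (μ : Measure Ω) [IsProbabilityMeasure μ]
    -- q0 is a PMF on 𝒳
    (q0 : 𝒳 → ℝ) (hq0_nonneg : ∀ x, 0 ≤ q0 x) (hq0_sum : ∑' x, q0 x = 1)
    -- matching set with M(x) ⊆ supp(q0) and |M(x)| = m < ∞
    (M : 𝒳 → Finset 𝒳)
    (hM_supp : ∀ x, ∀ x' ∈ M x, 0 < q0 x')
    -- i.i.d. observations from q0
    (X : ℕ → Ω → 𝒳)
    (hX_meas : ∀ i, Measurable (X i))
    (hX_dist : ∀ i x, μ (X i ⁻¹' {x}) = ENNReal.ofReal (q0 x))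
    (hX_indep : iIndepFun X μ)
    -- base unnormalised PMF, strictly positive on supp(q0), with finite total mass Z†
    (qdag : 𝒳 → ℝ)
    (Zdag : ℝ)
    (α : ℝ)
    -- the Laplace-smoothed estimator based on the first n samples
    (qhat : ℕ → Ω → 𝒳 → ℝ)
    (hqhat : ∀ n ω x, qhat n ω x =
      ((∑ i ∈ Finset.range n, if X i ω = x then (1 : ℝ) else 0) + α * qdag x)
        / ((n : ℝ) + α * Zdag)) :
    ∀ ε > (0 : ℝ), ∀ᵐ ω ∂μ, ∀ δ > (0 : ℝ), ∃ N : ℕ, ∀ n ≥ N,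
      ∀ x : 𝒳, ε ≤ q0 x → ∀ x' ∈ M x,
        |Real.log (qhat n ω x' / qhat n ω x) - Real.log (q0 x' / q0 x)| ≤ δ := by
  intro ε hε
  have hq0 : Summable q0 := by
    by_contra h
    simp [tsum_eq_zero_of_not_summable h] at hq0_sum
  have hident : ∀ i, IdentDistrib (X i) (X 0) μ μ := fun i =>
    identDistrib_of_forall_measure_preimage_singleton (hX_meas i) (hX_meas 0) fun x => by
      rw [hX_dist, hX_dist]
  have hqhat_lim : ∀ᵐ ω ∂μ, ∀ y, Tendsto (fun n => qhat n ω y) atTop (𝓝 (q0 y)) :=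
    ae_all_iff.2 fun y => by
      filter_upwards [ae_tendsto_empirical_frequency hX_meas
        (fun i j hij => hX_indep.indepFun hij) hident y] with ω hω
      rw [measureReal_def, hX_dist, ENNReal.toReal_ofReal (hq0_nonneg y)] at hω
      simpa only [hqhat] using tendsto_add_div_add_of_tendsto_div _ _ hω
  filter_upwards [hqhat_lim] with ω hω δ hδ
  have hpair : ∀ x ∈ {x | ε ≤ q0 x}, ∀ x' ∈ M x, ∀ᶠ n in atTop,
      |Real.log (qhat n ω x' / qhat n ω x) - Real.log (q0 x' / q0 x)| ≤ δ := by
    intro x hx x' hx'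
    have hlog := (((hω x').div (hω x) (hε.trans_le hx).ne').log
      (div_pos (hM_supp x x' hx') (hε.trans_le hx)).ne')
    exact hlog.eventually (Metric.closedBall_mem_nhds _ hδ)
  obtain ⟨N, hN⟩ := eventually_atTop.1
    ((hq0.finite_setOf_le hε).eventually_all.2 fun x hx => (M x).eventually_all.2 (hpair x hx))
  exact ⟨N, fun n hn x hx x' hx' => hN n hn x hx x' hx'⟩

/-- Uniform almost-sure consistency of the log-ratios of the
Laplace-smoothed estimator on truncated domains: for i.i.d. samples from `q0`, a matching
set `M` contained in the support of `q0`, and smoothing parameter `α > 0`, for every `ε > 0`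
the supremum over `{x : q0(x) ≥ ε}` of the maximal log-ratio estimation error along the
matching set tends to `0` almost surely. -/
theorem laplace_estimator_log_ratio_uniform_consistent
    {𝒳 : Type*} [Countable 𝒳] [DecidableEq 𝒳] [MeasurableSpace 𝒳] [MeasurableSingletonClass 𝒳]
    {Ω : Type*} [MeasurableSpace Ω] (μ : Measure Ω) [IsProbabilityMeasure μ]
    -- q0 is a PMF on 𝒳
    (q0 : 𝒳 → ℝ) (hq0_nonneg : ∀ x, 0 ≤ q0 x) (hq0_sum : ∑' x, q0 x = 1)
    -- matching set with M(x) ⊆ supp(q0) and |M(x)| = m < ∞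
    (M : 𝒳 → Finset 𝒳) (m : ℕ) (hm : 0 < m) (hM_card : ∀ x, (M x).card = m)
    (hM_supp : ∀ x, ∀ x' ∈ M x, 0 < q0 x')
    -- i.i.d. observations from q0
    (X : ℕ → Ω → 𝒳)
    (hX_meas : ∀ i, Measurable (X i))
    (hX_dist : ∀ i x, μ (X i ⁻¹' {x}) = ENNReal.ofReal (q0 x))
    (hX_indep : iIndepFun X μ)
    -- base unnormalised PMF, strictly positive on supp(q0), with finite total mass Z†
    (qdag : 𝒳 → ℝ) (hqdag_nonneg : ∀ x, 0 ≤ qdag x)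
    (hqdag_pos : ∀ x, 0 < q0 x → 0 < qdag x)
    (Zdag : ℝ) (hZdag : HasSum qdag Zdag)
    (α : ℝ) (hα : 0 < α)
    -- the Laplace-smoothed estimator based on the first n samples
    (qhat : ℕ → Ω → 𝒳 → ℝ)
    (hqhat : ∀ n ω x, qhat n ω x =
      ((∑ i ∈ Finset.range n, if X i ω = x then (1 : ℝ) else 0) + α * qdag x)
        / ((n : ℝ) + α * Zdag)) :
    ∀ ε > (0 : ℝ), ∀ᵐ ω ∂μ, ∀ δ > (0 : ℝ), ∃ N : ℕ, ∀ n ≥ N,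
      ∀ x : 𝒳, ε ≤ q0 x → ∀ x' ∈ M x,
        |Real.log (qhat n ω x' / qhat n ω x) - Real.log (q0 x' / q0 x)| ≤ δ :=
  laplace_estimator_log_ratio_uniform_consistent_general μ q0 hq0_nonneg hq0_sum M hM_supp X hX_meas
    hX_dist hX_indep qdag Zdag α qhat hqhat
end
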